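/- arXiv:1806.03752 — 7 statements merged into one kernel-verified Lean document; each statement's English description precedes it below -/
import Mathlib

section
/- Let G be a Polish group. Every Roelcke precompact subset of G is coarsely bounded; that is, if A ⊆ G satisfies that for every neighborhood V of the identity there is a finite F ⊆ G with A ⊆ VFV, then every continuous left-invariant pseudometric on G assigns finite diameter to A. -/
/-! A left-invariant pseudometric `d` is controlled by the length `g ↦ d 1 g`, which is
subadditive. Taking `V` to be the unit `d`-ball around `1`, Roelcke precompactness gives a finite
`F` with `A ⊆ V * F * V`, so the length is bounded on `A` by `2 + max_F (d 1)`; the diameter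
follows from `d x y ≤ d 1 x + d 1 y`. -/

open scoped Pointwise

/-- A subset `A` of a topological group `G` is *Roelcke precompact* if for every
neighborhood `V` of the identity there is a finite set `F ⊆ G` with `A ⊆ V * F * V`,
where `V * F * V = {v * f * w : v, w ∈ V, f ∈ F}`. -/
def RoelckePrecompact {G : Type*} [Group G] [TopologicalSpace G] (A : Set G) : Prop :=
  ∀ V ∈ nhds (1 : G), ∃ F : Finset G, A ⊆ V * (F : Set G) * V

/-- A subset `A` of a topological group is *coarsely bounded* if every continuous
left-invariant pseudometric on `G` assigns finite diameter to `A`. -/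
def IsCoarselyBounded {G : Type*} [Group G] [TopologicalSpace G] (A : Set G) : Prop :=
  ∀ d : G → G → ℝ,
    Continuous (fun p : G × G => d p.1 p.2) →
    (∀ x, d x x = 0) → (∀ x y, d x y = d y x) → (∀ x y z, d x z ≤ d x y + d y z) →
    (∀ g x y, d (g * x) (g * y) = d x y) →
    ∃ C : ℝ, ∀ x ∈ A, ∀ y ∈ A, d x y ≤ C

open scoped Topology

section LeftInvariantPseudometric

variable {G : Type*} [Group G] {d : G → G → ℝ}

theorem dist_one_mul_le (htri : ∀ x y z, d x z ≤ d x y + d y z)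
    (hinv : ∀ g x y, d (g * x) (g * y) = d x y) (g h : G) :
    d 1 (g * h) ≤ d 1 g + d 1 h := by
  have hshift : d g (g * h) = d 1 h := by simpa using hinv g 1 h
  simpa [hshift] using htri 1 g (g * h)

theorem dist_one_le_of_mem_mul (htri : ∀ x y z, d x z ≤ d x y + d y z)
    (hinv : ∀ g x y, d (g * x) (g * y) = d x y) {S T : Set G} {a b : ℝ}
    (hS : ∀ s ∈ S, d 1 s ≤ a) (hT : ∀ t ∈ T, d 1 t ≤ b) :
    ∀ x ∈ S * T, d 1 x ≤ a + b := by
  rintro _ ⟨s, hs, t, ht, rfl⟩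
  exact (dist_one_mul_le htri hinv s t).trans (add_le_add (hS s hs) (hT t ht))

theorem dist_le_dist_one_add (hsymm : ∀ x y, d x y = d y x)
    (htri : ∀ x y z, d x z ≤ d x y + d y z) (x y : G) :
    d x y ≤ d 1 x + d 1 y := by
  simpa [hsymm x 1] using htri x 1 y

theorem setOf_dist_one_lt_mem_nhds [TopologicalSpace G]
    (hcont : Continuous (fun p : G × G => d p.1 p.2)) (hrefl : d 1 1 = 0) {r : ℝ} (hr : 0 < r) :
    {g | d 1 g < r} ∈ 𝓝 (1 : G) := by
  have hlen : Continuous (d 1) := hcont.comp (continuous_const.prodMk continuous_id)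
  exact (isOpen_lt hlen continuous_const).mem_nhds (by simpa [hrefl] using hr)

end LeftInvariantPseudometric

theorem roelckePrecompact_isCoarselyBounded_general
    {G : Type*} [Group G] [TopologicalSpace G]
    (A : Set G) (hA : RoelckePrecompact A) : IsCoarselyBounded A := by
  intro d hcont hrefl hsymm htri hinv
  set V : Set G := {g | d 1 g < 1}
  obtain ⟨F, hF⟩ := hA V (setOf_dist_one_lt_mem_nhds hcont (hrefl 1) one_pos)
  obtain ⟨M, hM⟩ := (F.finite_toSet.image (d 1)).bddAbove
  have hV : ∀ v ∈ V, d 1 v ≤ 1 := fun v hv => le_of_lt hv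
  have hFM : ∀ f ∈ (F : Set G), d 1 f ≤ M := fun f hf => hM ⟨f, hf, rfl⟩
  have hlen : ∀ x ∈ A, d 1 x ≤ 1 + M + 1 := fun x hx =>
    dist_one_le_of_mem_mul htri hinv (dist_one_le_of_mem_mul htri hinv hV hFM) hV x (hF hx)
  refine ⟨(1 + M + 1) + (1 + M + 1), fun x hx y hy => ?_⟩
  exact (dist_le_dist_one_add hsymm htri x y).trans (add_le_add (hlen x hx) (hlen y hy))

/-- In a Polish group, every Roelcke precompact subset is coarsely bounded: every
continuous left-invariant pseudometric assigns it finite diameter. -/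
theorem roelckePrecompact_isCoarselyBounded
    {G : Type*} [Group G] [TopologicalSpace G] [IsTopologicalGroup G] [PolishSpace G]
    (A : Set G) (hA : RoelckePrecompact A) : IsCoarselyBounded A :=
  roelckePrecompact_isCoarselyBounded_general A hA
end

section
/- Let G be a Polish group that is Weil complete, i.e., complete in its left uniformity. If A, B ⊆ G are Roelcke precompact subsets, then the product set AB = {a*b : a ∈ A, b ∈ B} is Roelcke precompact. -/
/-!
In a Weil complete, first countable group, Roelcke precompact sets are relatively compact, so
`A * B` lies in the compact set `closure A * closure B`.

Let `ℱ` be an ultrafilter on `closure A` and `W n` a symmetric basis at `1` with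
`W (n+1) * W (n+1) ⊆ W n`. Roelcke precompactness puts some `W (n+2) * {f n} * W (n+2)` in `ℱ`
for every `n`; a point `a n` of the first `n + 1` of these sets satisfies
`a (n+1) = p n * a n * q n` with `p n, q n ∈ W (n+1)`. Hence `a n = P n * a 0 * Q n`, where
`Q n = q 0 ⋯ q (n-1)` is Cauchy for the left uniformity and `P n = p (n-1) ⋯ p 0` for the right
one. Inversion exchanges the two uniformities, so both converge, `a n → l`, and then `ℱ → l`.
-/

open scoped Pointwise

/-- The left uniformity of a topological group: the pullback under inversion of the
right uniformity `TopologicalGroup.toUniformSpace G`; its basic entourages are the sets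
`{(f,g) | f⁻¹ * g ∈ V}` for `V` a neighborhood of the identity. -/
noncomputable def leftUniformity (G : Type*) [Group G] [TopologicalSpace G]
    [IsTopologicalGroup G] : UniformSpace G :=
  UniformSpace.comap (fun g : G => g⁻¹) (IsTopologicalGroup.rightUniformSpace G)

open Filter Set Topology
open scoped Uniformity

section Group

variable {G : Type*} [Group G]

theorem mem_mul_singleton_mul {V : Set G} {x y : G} :
    x ∈ V * {y} * V ↔ ∃ p ∈ V, ∃ q ∈ V, p * y * q = x := by
  constructor
  · rintro ⟨_, ⟨p, hp, _, rfl, rfl⟩, q, hq, rfl⟩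
    exact ⟨p, hp, q, hq, rfl⟩
  · rintro ⟨p, hp, q, hq, rfl⟩
    exact Set.mul_mem_mul (Set.mul_mem_mul hp rfl) hq

theorem mem_mul_mul_singleton_mul_mul {U : Set G} (hU : U⁻¹ = U) {g x y : G}
    (hx : x ∈ U * {g} * U) (hy : y ∈ U * {g} * U) : x ∈ (U * U) * {y} * (U * U) := by
  obtain ⟨v, hv, w, hw, rfl⟩ := mem_mul_singleton_mul.1 hx
  obtain ⟨v', hv', w', hw', rfl⟩ := mem_mul_singleton_mul.1 hy
  have hv'' : v'⁻¹ ∈ U := hU ▸ Set.inv_mem_inv.2 hv'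
  have hw'' : w'⁻¹ ∈ U := hU ▸ Set.inv_mem_inv.2 hw'
  exact mem_mul_singleton_mul.2
    ⟨v * v'⁻¹, Set.mul_mem_mul hv hv'', w'⁻¹ * w, Set.mul_mem_mul hw'' hw, by group⟩

theorem inv_mul_mem_of_le {W : ℕ → Set G} (hW₁ : ∀ n, (1 : G) ∈ W n)
    (hW : ∀ n, W (n + 1) * W (n + 1) ⊆ W n) {Q : ℕ → G}
    (hQ : ∀ n, (Q n)⁻¹ * Q (n + 1) ∈ W (n + 1)) {n m : ℕ} (hnm : n ≤ m) :
    (Q n)⁻¹ * Q m ∈ W n := by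
  induction hnm using Nat.decreasingInduction with
  | self => simpa using hW₁ m
  | of_succ k _ ih =>
    simpa [mul_assoc] using hW k (Set.mul_mem_mul (hQ k) ih)

end Group

section TopologicalGroup

variable {G : Type*} [Group G] [TopologicalSpace G]

theorem RoelckePrecompact.mono {A B : Set G} (hB : RoelckePrecompact B) (h : A ⊆ B) :
    RoelckePrecompact A :=
  fun V hV => (hB V hV).imp fun _ hF => h.trans hF

theorem RoelckePrecompact.exists_mul_singleton_mul_mem {A : Set G} (hA : RoelckePrecompact A)
    (ℱ : Ultrafilter G) (hAℱ : A ∈ ℱ) {V : Set G} (hV : V ∈ 𝓝 1) :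
    ∃ g, V * {g} * V ∈ ℱ := by
  obtain ⟨F, hF⟩ := hA V hV
  have hcover : V * (F : Set G) * V = ⋃ g ∈ (F : Set G), V * {g} * V := by
    conv_lhs => rw [← Set.biUnion_of_singleton (F : Set G)]
    simp only [Set.mul_iUnion₂, Set.iUnion₂_mul]
  rw [hcover] at hF
  obtain ⟨g, -, hg⟩ :=
    (Ultrafilter.finite_biUnion_mem_iff F.finite_toSet).1 (ℱ.mem_of_superset hAℱ hF)
  exact ⟨g, hg⟩

variable [IsTopologicalGroup G]

theorem IsCompact.roelckePrecompact {K : Set G} (hK : IsCompact K) : RoelckePrecompact K := by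
  intro V hV
  obtain ⟨t, -, ht⟩ := hK.elim_nhds_subcover (fun x => x • V)
    (fun x _ => by simpa using smul_mem_nhds_smul x hV)
  refine ⟨t, fun y hy => ?_⟩
  obtain ⟨x, hx, v, hv, rfl⟩ := mem_iUnion₂.1 (ht hy)
  exact ⟨1 * x, Set.mul_mem_mul (mem_of_mem_nhds hV) hx, v, hv, by simp⟩

theorem RoelckePrecompact.closure {A : Set G} (hA : RoelckePrecompact A) :
    RoelckePrecompact (closure A) := by
  intro V hV
  obtain ⟨U, hU, -, hUinv, hUV⟩ := exists_closed_nhds_one_inv_eq_mul_subset hV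
  obtain ⟨F, hF⟩ := hA U hU
  refine ⟨F, (closure_subset_mul_right_of_mem_nhds_one_of_inv A hU
    fun x hx => hUinv ▸ Set.inv_mem_inv.2 hx).trans ?_⟩
  have hUV' : U ⊆ V := fun x hx => hUV (by simpa using Set.mul_mem_mul hx (mem_of_mem_nhds hU))
  calc A * U ⊆ U * F * U * U := Set.mul_subset_mul_right hF
    _ = U * F * (U * U) := by rw [mul_assoc]
    _ ⊆ V * F * V := Set.mul_subset_mul (Set.mul_subset_mul_right hUV') hUV

theorem leftUniformity_eq : leftUniformity G = IsTopologicalGroup.leftUniformSpace G := by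
  have hinv : (Equiv.inv G ∘ fun g : G => g⁻¹) = id := funext inv_inv
  rw [leftUniformity, ← comap_inv_leftUniformSpace, ← UniformSpace.comap_comap, hinv,
    uniformSpace_comap_id, id]

theorem exists_antitone_basis_nhds_one_inv_eq_mul_subset [FirstCountableTopology G] :
    ∃ W : ℕ → Set G, (𝓝 1).HasAntitoneBasis W ∧ (∀ n, (W n)⁻¹ = W n) ∧
      ∀ n, W (n + 1) * W (n + 1) ⊆ W n := by
  obtain ⟨u, hu, hmul⟩ := IsTopologicalGroup.exists_antitone_basis_nhds_one G
  have hinv : ∀ n, (u n ∩ (u n)⁻¹)⁻¹ = u n ∩ (u n)⁻¹ := fun n => by simp [inter_comm]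
  refine ⟨fun n => u n ∩ (u n)⁻¹,
    ⟨hu.toHasBasis.to_hasBasis' (fun n _ => ⟨n, trivial, inter_subset_left⟩)
      fun n _ => inter_mem (hu.mem n) (inv_mem_nhds_one G (hu.mem n)),
    hu.antitone.inf fun m n h => Set.inv_subset_inv.2 (hu.antitone h)⟩,
    hinv, fun n => ?_⟩
  have hsub : (u (n + 1) ∩ (u (n + 1))⁻¹) * (u (n + 1) ∩ (u (n + 1))⁻¹) ⊆ u n :=
    (Set.mul_subset_mul inter_subset_left inter_subset_left).trans (hmul n)
  refine subset_inter hsub fun x hx => ?_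
  beta_reduce at hx
  have hx' := Set.inv_mem_inv.2 hx
  rw [mul_inv_rev, hinv] at hx'
  exact hsub hx'

theorem exists_tendsto_of_inv_mul_succ_mem
    (hG : @CompleteSpace G (IsTopologicalGroup.leftUniformSpace G)) {W : ℕ → Set G}
    (hW : (𝓝 1).HasAntitoneBasis W) (hWinv : ∀ n, (W n)⁻¹ = W n)
    (hWmul : ∀ n, W (n + 1) * W (n + 1) ⊆ W n) {Q : ℕ → G}
    (hQ : ∀ n, (Q n)⁻¹ * Q (n + 1) ∈ W (n + 1)) : ∃ l, Tendsto Q atTop (𝓝 l) := by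
  let := IsTopologicalGroup.leftUniformSpace G
  have hbasis : (𝓤 G).HasBasis (fun _ => True) fun n => {p | p.1⁻¹ * p.2 ∈ W n} := by
    rw [uniformity_eq_comap_nhds_one_left]
    exact hW.toHasBasis.comap _
  have hQW : ∀ {n m}, n ≤ m → (Q n)⁻¹ * Q m ∈ W n :=
    inv_mul_mem_of_le (fun n => mem_of_mem_nhds (hW.mem n)) hWmul hQ
  refine cauchySeq_tendsto_of_complete <| hbasis.cauchySeq_iff.2
    fun n _ => ⟨n + 1, fun i hi j hj => ?_⟩
  have hij := hWmul n (Set.mul_mem_mul (hWinv (n + 1) ▸ Set.inv_mem_inv.2 (hQW hi)) (hQW hj))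
  simpa [mul_assoc] using hij

theorem exists_tendsto_of_mem_mul_singleton_mul
    (hG : @CompleteSpace G (IsTopologicalGroup.leftUniformSpace G)) {W : ℕ → Set G}
    (hW : (𝓝 1).HasAntitoneBasis W) (hWinv : ∀ n, (W n)⁻¹ = W n)
    (hWmul : ∀ n, W (n + 1) * W (n + 1) ⊆ W n) {a : ℕ → G}
    (ha : ∀ n, a (n + 1) ∈ W (n + 1) * {a n} * W (n + 1)) : ∃ l, Tendsto a atTop (𝓝 l) := by
  choose p hp q hq hpq using fun n => mem_mul_singleton_mul.1 (ha n)
  set Q : ℕ → G := fun n => ((List.range n).map q).prod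
  have hQ_succ : ∀ n, Q (n + 1) = Q n * q n := fun n => by simp [Q, List.range_succ]
  obtain ⟨l₁, hl₁⟩ := exists_tendsto_of_inv_mul_succ_mem hG hW hWinv hWmul (Q := Q)
    fun n => by simpa [hQ_succ] using hq n
  -- `Q n * (a n)⁻¹ = (p (n-1) ⋯ p 0 * a 0)⁻¹`
  obtain ⟨l₂, hl₂⟩ := exists_tendsto_of_inv_mul_succ_mem hG hW hWinv hWmul
    (Q := fun n => Q n * (a n)⁻¹) fun n => by
      rw [← hWinv]
      simpa [hQ_succ, ← hpq, mul_assoc] using hp n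
  exact ⟨l₂⁻¹ * l₁, (hl₂.inv.mul hl₁).congr fun n => by simp⟩

theorem le_nhds_of_mul_singleton_mul_mem {V : ℕ → Set G}
    (hV : Tendsto V atTop (𝓝 1).smallSets) {a : ℕ → G} {l : G} (ha : Tendsto a atTop (𝓝 l))
    {ℱ : Filter G} (hℱ : ∀ n, V n * {a n} * V n ∈ ℱ) : ℱ ≤ 𝓝 l := by
  intro O hO
  rw [← nhds_mul_nhds_one l, ← nhds_one_mul_nhds l] at hO
  obtain ⟨T, hT, N₂, hN₂, hTN⟩ := Filter.mem_mul.1 hO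
  obtain ⟨N₁, hN₁, N, hN, hNN⟩ := Filter.mem_mul.1 hT
  obtain ⟨n, hVn, han⟩ := ((tendsto_smallSets_iff.1 hV _ (inter_mem hN₁ hN₂)).and
    (ha.eventually_mem hN)).exists
  have hVa : V n * {a n} ⊆ N₁ * N :=
    Set.mul_subset_mul (hVn.trans inter_subset_left) (singleton_subset_iff.2 han)
  refine mem_of_superset (hℱ n) ?_
  calc V n * {a n} * V n ⊆ N₁ * N * N₂ := Set.mul_subset_mul hVa (hVn.trans inter_subset_right)
    _ ⊆ O := (Set.mul_subset_mul_right hNN).trans hTN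

theorem RoelckePrecompact.isCompact_closure [FirstCountableTopology G]
    (hG : @CompleteSpace G (IsTopologicalGroup.leftUniformSpace G)) {A : Set G}
    (hA : RoelckePrecompact A) : IsCompact (_root_.closure A) := by
  obtain ⟨W, hW, hWinv, hWmul⟩ := exists_antitone_basis_nhds_one_inv_eq_mul_subset (G := G)
  refine isCompact_iff_ultrafilter_le_nhds.2 fun ℱ hℱ => ?_
  have hAℱ : _root_.closure A ∈ ℱ := le_principal_iff.1 hℱ
  choose f hf using fun n => hA.closure.exists_mul_singleton_mul_mem ℱ hAℱ (hW.mem (n + 2))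
  set S : ℕ → Set G := fun n => _root_.closure A ∩ ⋂ k ∈ Iic n, W (k + 2) * {f k} * W (k + 2)
  have hS : ∀ n, S n ∈ ℱ := fun n =>
    inter_mem hAℱ ((biInter_mem (finite_Iic n)).2 fun k _ => hf k)
  have hS_succ : ∀ n, S (n + 1) ⊆ S n := fun n x hx =>
    ⟨hx.1, mem_iInter₂.2 fun k hk => mem_iInter₂.1 hx.2 k (Iic_subset_Iic.2 n.le_succ hk)⟩
  choose a ha using fun n => ℱ.nonempty_of_mem (hS n)
  have hS_near : ∀ n, S n ⊆ W (n + 1) * {a n} * W (n + 1) := fun n x hx =>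
    Set.mul_subset_mul (Set.mul_subset_mul_right (hWmul (n + 1))) (hWmul (n + 1)) <|
      mem_mul_mul_singleton_mul_mul (hWinv (n + 2)) (mem_iInter₂.1 hx.2 n self_mem_Iic)
        (mem_iInter₂.1 (ha n).2 n self_mem_Iic)
  obtain ⟨l, hl⟩ := exists_tendsto_of_mem_mul_singleton_mul hG hW hWinv hWmul fun n =>
    hS_near n (hS_succ n (ha (n + 1)))
  exact ⟨l, isClosed_closure.mem_of_tendsto hl (Eventually.of_forall fun n => (ha n).1),
    le_nhds_of_mul_singleton_mul_mem (hW.tendsto_smallSets.comp (tendsto_add_atTop_nat 1)) hl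
      fun n => mem_of_superset (hS n) (hS_near n)⟩

end TopologicalGroup

/-- In a Weil complete Polish group (one complete in its left uniformity), the product of
two Roelcke precompact subsets is Roelcke precompact. -/
theorem roelckePrecompact_mul_of_weilComplete
    {G : Type*} [Group G] [TopologicalSpace G] [IsTopologicalGroup G] [PolishSpace G]
    (hWeil : @CompleteSpace G (leftUniformity G))
    (A B : Set G) (hA : RoelckePrecompact A) (hB : RoelckePrecompact B) :
    RoelckePrecompact (A * B) := by
  rw [leftUniformity_eq] at hWeil
  have hAB : IsCompact (closure A * closure B) :=
    (hA.isCompact_closure hWeil).mul (hB.isCompact_closure hWeil)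
  exact hAB.roelckePrecompact.mono (Set.mul_subset_mul subset_closure subset_closure)
end

section
/- Let G be a locally Roelcke precompact Polish group. If A, B ⊆ G are Roelcke precompact subsets, then the product set AB = {a*b : a ∈ A, b ∈ B} is Roelcke precompact. -/
/-!
Let `U` be a Roelcke precompact neighborhood of `1` and `V` a neighborhood of `1`. Pick a small
`V₁` with `V₁ V₁ ⊆ U` and cover `A ⊆ V₁ F_A V₁`, `B ⊆ V₁ F_B V₁`, so that
`AB ⊆ V₁ F_A U F_B V₁`. Cover `U ⊆ W F_U W` with `W` so small that its conjugates by the finitely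
many elements of `F_A` and `F_B` stay small; then `W` can be moved past `F_A` and `F_B` to the
outside, giving `AB ⊆ V (F_A F_U F_B) V`.
-/

open scoped Pointwise

/-- A topological group is *locally Roelcke precompact* if some open neighborhood
of the identity is Roelcke precompact. -/
def LocallyRoelckePrecompact (G : Type*) [Group G] [TopologicalSpace G] : Prop :=
  ∃ U : Set G, IsOpen U ∧ (1 : G) ∈ U ∧ RoelckePrecompact U

open Filter Topology

section Group

variable {G : Type*} [Group G]

theorem Set.mul_subset_mul_swap_of_conj_mem {F W W' : Set G}
    (h : ∀ f ∈ F, ∀ w ∈ W, f * w * f⁻¹ ∈ W') : F * W ⊆ W' * F := by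
  rintro _ ⟨f, hf, w, hw, rfl⟩
  exact ⟨f * w * f⁻¹, h f hf w hw, f, hf, by group⟩

theorem Set.mul_subset_mul_swap_of_conj_inv_mem {F W W' : Set G}
    (h : ∀ f ∈ F, ∀ w ∈ W, f⁻¹ * w * f ∈ W') : W * F ⊆ F * W' := by
  rintro _ ⟨w, hw, f, hf, rfl⟩
  exact ⟨f, hf, f⁻¹ * w * f, h f hf w hw, by group⟩

theorem Set.mul_subset_mul_mul_mul_of_conj_mem {A B U V V' W FA FB FU : Set G}
    (hA : A ⊆ V * FA * V) (hB : B ⊆ V * FB * V) (hVU : V * V ⊆ U) (hU : U ⊆ W * FU * W)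
    (hFA : ∀ f ∈ FA, ∀ w ∈ W, f * w * f⁻¹ ∈ V') (hFB : ∀ f ∈ FB, ∀ w ∈ W, f⁻¹ * w * f ∈ V') :
    A * B ⊆ V * V' * (FA * FU * FB) * (V' * V) :=
  calc A * B ⊆ V * FA * V * (V * FB * V) := Set.mul_subset_mul hA hB
    _ = V * FA * (V * V) * FB * V := by simp only [mul_assoc]
    _ ⊆ V * FA * (W * FU * W) * FB * V := by gcongr V * FA * ?_ * FB * V; exact hVU.trans hU
    _ = V * (FA * W) * FU * (W * FB) * V := by simp only [mul_assoc]
    _ ⊆ V * (V' * FA) * FU * (FB * V') * V := by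
      gcongr V * ?_ * FU * ?_ * V
      exacts [Set.mul_subset_mul_swap_of_conj_mem hFA, Set.mul_subset_mul_swap_of_conj_inv_mem hFB]
    _ = V * V' * (FA * FU * FB) * (V' * V) := by simp only [mul_assoc]

section Topological

variable [TopologicalSpace G]

theorem eventually_forall_conj_mem_and_conj_inv_mem [SeparatelyContinuousMul G] {V : Set G}
    (hV : V ∈ 𝓝 1) (F : Finset G) :
    ∀ᶠ x in 𝓝 1, ∀ f ∈ F, f * x * f⁻¹ ∈ V ∧ f⁻¹ * x * f ∈ V := by
  have hconj (g : G) : Tendsto (g * · * g⁻¹) (𝓝 1) (𝓝 1) := by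
    simpa using (IsTopologicalGroup.continuous_conj g).tendsto 1
  refine (eventually_all_finset F).2 fun f _ => ?_
  have hinv : ∀ᶠ x in 𝓝 1, f⁻¹ * x * f⁻¹⁻¹ ∈ V := (hconj f⁻¹).eventually_mem hV
  simp only [inv_inv] at hinv
  exact ((hconj f).eventually_mem hV).and hinv

theorem RoelckePrecompact.mul [IsTopologicalGroup G] {A B U : Set G} (hA : RoelckePrecompact A)
    (hB : RoelckePrecompact B) (hU : U ∈ 𝓝 1) (hUc : RoelckePrecompact U) :
    RoelckePrecompact (A * B) := by
  classical
  intro V hV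
  obtain ⟨V', hV'o, hV'1, hV'V⟩ := exists_open_nhds_one_mul_subset hV
  obtain ⟨V₁, hV₁o, hV₁1, hV₁⟩ :=
    exists_open_nhds_one_mul_subset (inter_mem hU (hV'o.mem_nhds hV'1))
  have hV₁V' : V₁ ⊆ V' :=
    (Set.subset_mul_left V₁ hV₁1).trans (hV₁.trans Set.inter_subset_right)
  obtain ⟨FA, hFA⟩ := hA V₁ (hV₁o.mem_nhds hV₁1)
  obtain ⟨FB, hFB⟩ := hB V₁ (hV₁o.mem_nhds hV₁1)
  obtain ⟨FU, hFU⟩ :=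
    hUc _ (eventually_forall_conj_mem_and_conj_inv_mem (hV'o.mem_nhds hV'1) (FA ∪ FB))
  refine ⟨FA * FU * FB, ?_⟩
  rw [Finset.coe_mul, Finset.coe_mul]
  refine (Set.mul_subset_mul_mul_mul_of_conj_mem hFA hFB (hV₁.trans Set.inter_subset_left) hFU
    (fun f hf w hw => (hw f (Finset.mem_union_left _ hf)).1)
    (fun f hf w hw => (hw f (Finset.mem_union_right _ hf)).2)).trans ?_
  gcongr
  · exact (Set.mul_subset_mul hV₁V' subset_rfl).trans hV'V
  · exact (Set.mul_subset_mul subset_rfl hV₁V').trans hV'V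

end Topological

end Group

theorem roelckePrecompact_mul_of_locallyRoelckePrecompact_general
    {G : Type*} [Group G] [TopologicalSpace G] [IsTopologicalGroup G]
    (hG : LocallyRoelckePrecompact G)
    (A B : Set G) (hA : RoelckePrecompact A) (hB : RoelckePrecompact B) :
    RoelckePrecompact (A * B) := by
  obtain ⟨U, hUo, hU1, hU⟩ := hG
  exact hA.mul hB (hUo.mem_nhds hU1) hU

/-- In a locally Roelcke precompact Polish group, the product of two Roelcke precompact
subsets is Roelcke precompact. -/
theorem roelckePrecompact_mul_of_locallyRoelckePrecompact
    {G : Type*} [Group G] [TopologicalSpace G] [IsTopologicalGroup G] [PolishSpace G]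
    (hG : LocallyRoelckePrecompact G)
    (A B : Set G) (hA : RoelckePrecompact A) (hB : RoelckePrecompact B) :
    RoelckePrecompact (A * B) :=
  roelckePrecompact_mul_of_locallyRoelckePrecompact_general hG A B hA hB
end

section
/- Let G be a locally Roelcke precompact Polish group and N a closed normal subgroup of G. Then the quotient group G/N, with the quotient topology (under which it is a Polish group), is locally Roelcke precompact. -/
open scoped Pointwise

/-! Roelcke precompactness is pushed forward by continuous homomorphisms, since the preimage of
an identity neighbourhood is one and images of products are products of images; an open map
then carries an open Roelcke precompact identity neighbourhood to another one. -/

section PushForward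

variable {G H : Type*} [Group G] [TopologicalSpace G] [Group H] [TopologicalSpace H]

theorem RoelckePrecompact.image {A : Set G} (hA : RoelckePrecompact A) (f : G →* H)
    (hf : Continuous f) : RoelckePrecompact (f '' A) := by
  classical
  intro V hV
  have hV' : f ⁻¹' V ∈ nhds (1 : G) := hf.continuousAt.preimage_mem_nhds (by rwa [map_one])
  obtain ⟨F, hF⟩ := hA _ hV'
  refine ⟨F.image f, ?_⟩
  calc f '' A ⊆ f '' (f ⁻¹' V * F * f ⁻¹' V) := Set.image_mono hF
    _ = f '' (f ⁻¹' V) * f '' F * f '' (f ⁻¹' V) := by rw [Set.image_mul, Set.image_mul]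
    _ ⊆ V * (F.image f : Set H) * V := by
      rw [Finset.coe_image]
      gcongr <;> exact Set.image_preimage_subset _ _

theorem LocallyRoelckePrecompact.of_isOpenMap (hG : LocallyRoelckePrecompact G) (f : G →* H)
    (hf : Continuous f) (hfo : IsOpenMap f) : LocallyRoelckePrecompact H := by
  obtain ⟨U, hUo, hU1, hU⟩ := hG
  exact ⟨f '' U, hfo U hUo, ⟨1, hU1, map_one f⟩, hU.image f hf⟩

end PushForward

theorem locallyRoelckePrecompact_quotient_general
    (G : Type*) [Group G] [TopologicalSpace G] [IsTopologicalGroup G]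
    (N : Subgroup G) [N.Normal]
    (hG : LocallyRoelckePrecompact G) :
    LocallyRoelckePrecompact (G ⧸ N) :=
  hG.of_isOpenMap (QuotientGroup.mk' N) QuotientGroup.continuous_mk QuotientGroup.isOpenMap_coe

/-- The quotient of a locally Roelcke precompact Polish group by a closed normal subgroup
(a Polish group in the quotient topology) is locally Roelcke precompact. -/
theorem locallyRoelckePrecompact_quotient
    (G : Type*) [Group G] [TopologicalSpace G] [IsTopologicalGroup G] [PolishSpace G]
    (N : Subgroup G) [N.Normal] (hN : IsClosed (N : Set G))
    (hG : LocallyRoelckePrecompact G) :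
    LocallyRoelckePrecompact (G ⧸ N) :=
  locallyRoelckePrecompact_quotient_general G N hG
end

section
/- Suppose (X,d) is a separable, complete, pair-propinquitous, approximately ultrahomogeneous metric space. Then for every x ∈ X and every r > 0, the set V_{{x},r} = {f ∈ Iso(X) : d(x, f(x)) < r} is a Roelcke precompact subset of Iso(X); in particular, Iso(X) is locally Roelcke precompact. -/
open scoped Pointwise

/-- The topology of pointwise convergence on the isometry group of a metric space. -/
noncomputable def isoGroupTopology (X : Type*) [MetricSpace X] :
    TopologicalSpace (X ≃ᵢ X) :=
  TopologicalSpace.induced (fun f : X ≃ᵢ X => (f : X → X)) Pi.topologicalSpace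

/-- A metric space `X` is *pair-propinquitous* if for every finite metric space `A` and
every `ε > 0` there is `δ > 0` such that whenever `i₁, i₂, j₁, j₂ : A → X` are isometric
embeddings with `|d(i₁ a, i₂ b) − d(j₁ a, j₂ b)| < δ` for all `a, b ∈ A`, there are
isometric embeddings `j₁', j₂' : A → X` with `d(j₁ a, j₂ b) = d(j₁' a, j₂' b)`,
`d(i₁ a, j₁' a) < ε` and `d(i₂ a, j₂' a) < ε` for all `a, b ∈ A`. -/
def PairPropinquitous (X : Type*) [MetricSpace X] : Prop :=
  ∀ (A : Type) [MetricSpace A] [Finite A], ∀ ε : ℝ, 0 < ε → ∃ δ : ℝ, 0 < δ ∧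
    ∀ i₁ i₂ j₁ j₂ : A → X, Isometry i₁ → Isometry i₂ → Isometry j₁ → Isometry j₂ →
      (∀ a b : A, |dist (i₁ a) (i₂ b) - dist (j₁ a) (j₂ b)| < δ) →
      ∃ j₁' j₂' : A → X, Isometry j₁' ∧ Isometry j₂' ∧
        (∀ a b : A, dist (j₁ a) (j₂ b) = dist (j₁' a) (j₂' b)) ∧
        (∀ a : A, dist (i₁ a) (j₁' a) < ε) ∧ (∀ a : A, dist (i₂ a) (j₂' a) < ε)

/-- A metric space `X` is *approximately ultrahomogeneous* if for every `ε > 0` and every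
isometry `f` defined on a finite subset of `X` there is a surjective self-isometry of `X`
agreeing with `f` up to `ε` at every point of the domain of `f`. -/
def ApproximatelyUltrahomogeneous (X : Type*) [MetricSpace X] : Prop :=
  ∀ (A : Finset X) (f : A → X), Isometry f → ∀ ε : ℝ, 0 < ε →
    ∃ g : X ≃ᵢ X, ∀ a : A, dist (f a) (g (a : X)) < ε

/-!
Fix a basic neighbourhood `V_{A,ε}` of the identity. The map `g ↦ (d(a, g b))_{a,b ∈ A}` sends
`V_{{x},r}` into a bounded, hence totally bounded, subset of `ℝ^{A×A}`, so finitely many `g₀`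
approximate the distance matrix of every `g ∈ V_{{x},r}` up to any `δ`. When `g` and `g₀` are
`δ`-close in this sense, pair-propinquity moves the configuration `(A, g₀ A)` to one `(j₁ A, j₂ A)`
with `j₁ ≈ id` and `j₂ ≈ g` on `A`, and approximate ultrahomogeneity realises
`a ↦ j₁ a, g₀ b ↦ j₂ b` up to `ε` by some `h ∈ V_{A,ε}`. Then `k = g⁻¹ h g₀` lies in `V_{A,ε}`
as well, and `g = h g₀ k⁻¹ ∈ V_{A,ε} g₀ V_{A,ε}`.
-/

open Filter Topology Metric

/-- The definition only quantifies over finite metric spaces in `Type`; transporting along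
`A ≃ Fin n` gives the same `δ`-property for finite metric spaces in any universe. -/
theorem PairPropinquitous.exists_delta {X : Type*} [MetricSpace X] (hX : PairPropinquitous X)
    (A : Type*) [MetricSpace A] [Finite A] {ε : ℝ} (hε : 0 < ε) :
    ∃ δ > 0, ∀ i₁ i₂ j₁ j₂ : A → X, Isometry i₁ → Isometry i₂ → Isometry j₁ → Isometry j₂ →
      (∀ a b : A, |dist (i₁ a) (i₂ b) - dist (j₁ a) (j₂ b)| < δ) →
      ∃ j₁' j₂' : A → X, Isometry j₁' ∧ Isometry j₂' ∧
        (∀ a b : A, dist (j₁ a) (j₂ b) = dist (j₁' a) (j₂' b)) ∧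
        (∀ a : A, dist (i₁ a) (j₁' a) < ε) ∧ (∀ a : A, dist (i₂ a) (j₂' a) < ε) := by
  obtain ⟨n, ⟨e⟩⟩ := Finite.exists_equiv_fin A
  let : MetricSpace (Fin n) := MetricSpace.induced e.symm e.symm.injective ‹_›
  have he_symm : Isometry e.symm := Isometry.of_dist_eq fun _ _ => rfl
  have he : Isometry e := Isometry.of_dist_eq fun a b => by
    simpa using (he_symm.dist_eq (e a) (e b)).symm
  obtain ⟨δ, hδ, hpair⟩ := hX (Fin n) ε hε
  refine ⟨δ, hδ, fun i₁ i₂ j₁ j₂ hi₁ hi₂ hj₁ hj₂ hclose => ?_⟩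
  obtain ⟨k₁, k₂, hk₁, hk₂, hk, hk₁ε, hk₂ε⟩ := hpair (i₁ ∘ e.symm) (i₂ ∘ e.symm) (j₁ ∘ e.symm)
    (j₂ ∘ e.symm) (hi₁.comp he_symm) (hi₂.comp he_symm) (hj₁.comp he_symm) (hj₂.comp he_symm)
    fun a b => hclose _ _
  refine ⟨k₁ ∘ e, k₂ ∘ e, hk₁.comp he, hk₂.comp he, fun a b => ?_, fun a => ?_, fun a => ?_⟩
  · simpa using hk (e a) (e b)
  · simpa using hk₁ε (e a)
  · simpa using hk₂ε (e a)

theorem ApproximatelyUltrahomogeneous.exists_dist_lt {X : Type*} [MetricSpace X]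
    (hX : ApproximatelyUltrahomogeneous X) {ι : Type*} [Finite ι] {i j : ι → X}
    (hij : ∀ a b, dist (i a) (i b) = dist (j a) (j b)) {ε : ℝ} (hε : 0 < ε) :
    ∃ h : X ≃ᵢ X, ∀ a, dist (j a) (h (i a)) < ε := by
  classical
  have hS : ∀ z : (Set.finite_range i).toFinset, ∃ a, i a = z := fun z =>
    (Set.finite_range i).mem_toFinset.1 z.2
  choose σ hσ using hS
  have hf : Isometry (j ∘ σ) := Isometry.of_dist_eq fun z w => by
    simp [← hij, hσ, Subtype.dist_eq]
  obtain ⟨h, hh⟩ := hX _ (j ∘ σ) hf ε hε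
  refine ⟨h, fun a => ?_⟩
  let z : (Set.finite_range i).toFinset := ⟨i a, (Set.finite_range i).mem_toFinset.2 ⟨a, rfl⟩⟩
  have hz : j (σ z) = j a := dist_eq_zero.1 (by rw [← hij, hσ z, dist_self])
  simpa [hz] using hh z

theorem exists_finset_dist_lt_of_totallyBounded_image {α β : Type*} [PseudoMetricSpace β]
    {f : α → β} {S : Set α} (hS : TotallyBounded (f '' S)) {δ : ℝ} (hδ : 0 < δ) :
    ∃ F : Finset α, ∀ a ∈ S, ∃ b ∈ F, dist (f a) (f b) < δ := by
  obtain ⟨T, -, hT, hcover⟩ :=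
    Set.exists_subset_image_finite_and.1 (finite_approx_of_totallyBounded hS δ hδ)
  refine ⟨hT.toFinset, fun a ha => ?_⟩
  obtain ⟨_, ⟨b, hb, rfl⟩, hab⟩ : ∃ y ∈ f '' T, f a ∈ ball y δ := by
    simpa using hcover (Set.mem_image_of_mem f ha)
  exact ⟨b, hT.mem_toFinset.2 hb, hab⟩

section IsometryGroup

variable {X : Type*} [MetricSpace X]

noncomputable instance : TopologicalSpace (X ≃ᵢ X) := isoGroupTopology X

/-- The basic neighbourhood `V_{A,ε}` of the identity. -/
def isoNbhd (A : Finset X) (ε : ℝ) : Set (X ≃ᵢ X) :=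
  {f | ∀ a ∈ A, dist a (f a) < ε}

theorem inv_mem_isoNbhd {A : Finset X} {ε : ℝ} {f : X ≃ᵢ X} (hf : f ∈ isoNbhd A ε) :
    f⁻¹ ∈ isoNbhd A ε := by
  intro a ha
  rw [← f.dist_eq, f.apply_inv_self, dist_comm]
  exact hf a ha

theorem exists_isoNbhd_subset_of_mem_nhds {V : Set (X ≃ᵢ X)} (hV : V ∈ 𝓝 1) :
    ∃ (A : Finset X) (ε : ℝ), 0 < ε ∧ isoNbhd A ε ⊆ V := by
  obtain ⟨U, hU, hUV⟩ := mem_comap.1 (nhds_induced (fun f : X ≃ᵢ X => (f : X → X)) 1 ▸ hV)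
  rw [nhds_pi, mem_pi'] at hU
  obtain ⟨A, t, ht, hAU⟩ := hU
  have hball : ∀ a ∈ A, ∀ᶠ ε in 𝓝[>] (0 : ℝ), ball a ε ⊆ t a := fun a _ => by
    obtain ⟨ε₀, hε₀, hsub⟩ := Metric.mem_nhds_iff.1 (ht a)
    filter_upwards [Ioo_mem_nhdsGT hε₀] with ε hε using (ball_subset_ball hε.2.le).trans hsub
  obtain ⟨ε, hεA, hε⟩ := (((eventually_all_finset A).2 hball).and self_mem_nhdsWithin).exists
  refine ⟨A, ε, hε, fun f hf => hUV (hAU fun a ha => hεA a ha ?_)⟩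
  rw [mem_ball, dist_comm]
  exact hf a ha

theorem isOpen_setOf_dist_apply_lt (x : X) (r : ℝ) : IsOpen {f : X ≃ᵢ X | dist x (f x) < r} :=
  isOpen_lt (continuous_const.dist ((continuous_apply x).comp continuous_induced_dom))
    continuous_const

theorem mem_isoNbhd_mul_mul_of_dist_lt {A : Finset X} {ε : ℝ} {g g₀ h : X ≃ᵢ X}
    (hh : h ∈ isoNbhd A ε) (hg : ∀ b ∈ A, dist (g b) (h (g₀ b)) < ε) :
    g ∈ isoNbhd A ε * {g₀} * isoNbhd A ε := by
  refine Set.mem_mul.2 ⟨h * g₀, Set.mul_mem_mul hh rfl, (g⁻¹ * h * g₀)⁻¹,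
    inv_mem_isoNbhd fun b hb => ?_, by group⟩
  rw [← g.dist_eq]
  simpa using hg b hb

theorem exists_finset_abs_dist_sub_lt (x : X) (r : ℝ) (A : Finset X) {δ : ℝ} (hδ : 0 < δ) :
    ∃ F : Finset (X ≃ᵢ X), ∀ g : X ≃ᵢ X, dist x (g x) < r →
      ∃ g₀ ∈ F, ∀ a ∈ A, ∀ b ∈ A, |dist a (g b) - dist a (g₀ b)| < δ := by
  let Φ : (X ≃ᵢ X) → (A × A → ℝ) := fun g p => dist (p.1 : X) (g p.2)
  have hΦ : Φ '' {g | dist x (g x) < r} ⊆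
      Set.univ.pi fun p => Set.Icc 0 (dist (p.1 : X) x + r + dist x p.2) := by
    rintro _ ⟨g, hg : dist x (g x) < r, rfl⟩ p -
    refine ⟨dist_nonneg, ?_⟩
    calc dist (p.1 : X) (g p.2) ≤ dist (p.1 : X) x + dist x (g x) + dist (g x) (g p.2) :=
          dist_triangle4 _ _ _ _
      _ ≤ dist (p.1 : X) x + r + dist x p.2 := by rw [g.dist_eq]; linarith
  obtain ⟨F, hF⟩ := exists_finset_dist_lt_of_totallyBounded_image
    ((isCompact_univ_pi fun _ => isCompact_Icc).totallyBounded.subset hΦ) hδ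
  refine ⟨F, fun g hg => ?_⟩
  obtain ⟨g₀, hg₀, hgg₀⟩ := hF g hg
  exact ⟨g₀, hg₀, fun a ha b hb => (dist_pi_lt_iff hδ).1 hgg₀ (⟨a, ha⟩, ⟨b, hb⟩)⟩

theorem exists_pos_mem_isoNbhd_mul_mul (hpp : PairPropinquitous X)
    (hau : ApproximatelyUltrahomogeneous X) (A : Finset X) {ε : ℝ} (hε : 0 < ε) :
    ∃ δ > 0, ∀ g g₀ : X ≃ᵢ X, (∀ a ∈ A, ∀ b ∈ A, |dist a (g b) - dist a (g₀ b)| < δ) →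
      g ∈ isoNbhd A ε * {g₀} * isoNbhd A ε := by
  obtain ⟨δ, hδ, hpair⟩ := hpp.exists_delta A (half_pos hε)
  refine ⟨δ, hδ, fun g g₀ hg => ?_⟩
  have hA : Isometry ((↑) : A → X) := isometry_subtype_coe
  obtain ⟨j₁, j₂, hj₁, hj₂, hj, hj₁ε, hj₂ε⟩ := hpair (↑) (g ∘ (↑)) (↑) (g₀ ∘ (↑)) hA
    (g.isometry.comp hA) hA (g₀.isometry.comp hA) fun a b => hg a a.2 b b.2
  let i : A ⊕ A → X := Sum.elim (↑) (g₀ ∘ (↑))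
  let j : A ⊕ A → X := Sum.elim j₁ j₂
  have hij : ∀ a b, dist (i a) (i b) = dist (j a) (j b) := by
    rintro (a | a) (b | b)
    · exact (hj₁.dist_eq a b).symm
    · exact hj a b
    · exact (dist_comm _ _).trans ((hj b a).trans (dist_comm _ _))
    · exact (g₀.dist_eq a b).trans (hj₂.dist_eq a b).symm
  obtain ⟨h, hh⟩ := hau.exists_dist_lt hij (half_pos hε)
  refine mem_isoNbhd_mul_mul_of_dist_lt (h := h) (fun a ha => ?_) fun b hb => ?_
  · calc dist a (h a) ≤ dist a (j₁ ⟨a, ha⟩) + dist (j₁ ⟨a, ha⟩) (h a) := dist_triangle _ _ _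
      _ < ε / 2 + ε / 2 := add_lt_add (hj₁ε ⟨a, ha⟩) (hh (.inl ⟨a, ha⟩))
      _ = ε := add_halves ε
  · calc dist (g b) (h (g₀ b)) ≤ dist (g b) (j₂ ⟨b, hb⟩) + dist (j₂ ⟨b, hb⟩) (h (g₀ b)) :=
          dist_triangle _ _ _
      _ < ε / 2 + ε / 2 := add_lt_add (hj₂ε ⟨b, hb⟩) (hh (.inr ⟨b, hb⟩))
      _ = ε := add_halves ε

theorem roelckePrecompact_setOf_dist_apply_lt (hpp : PairPropinquitous X)
    (hau : ApproximatelyUltrahomogeneous X) (x : X) (r : ℝ) :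
    RoelckePrecompact {f : X ≃ᵢ X | dist x (f x) < r} := by
  intro V hV
  obtain ⟨A, ε, hε, hAV⟩ := exists_isoNbhd_subset_of_mem_nhds hV
  obtain ⟨δ, hδ, hfactor⟩ := exists_pos_mem_isoNbhd_mul_mul hpp hau A hε
  obtain ⟨F, hF⟩ := exists_finset_abs_dist_sub_lt x r A hδ
  refine ⟨F, fun g hg => ?_⟩
  obtain ⟨g₀, hg₀, hgg₀⟩ := hF g hg
  exact Set.mul_subset_mul (Set.mul_subset_mul hAV (Set.singleton_subset_iff.2 hg₀)) hAV
    (hfactor g g₀ hgg₀)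

end IsometryGroup

theorem iso_locallyRoelckePrecompact_general
    (X : Type*) [MetricSpace X]
    (hpp : PairPropinquitous X) (hau : ApproximatelyUltrahomogeneous X)
    (x : X) (r : ℝ) :
    @RoelckePrecompact (X ≃ᵢ X) _ (isoGroupTopology X) {f : X ≃ᵢ X | dist x (f x) < r} ∧
    @LocallyRoelckePrecompact (X ≃ᵢ X) _ (isoGroupTopology X) :=
  ⟨roelckePrecompact_setOf_dist_apply_lt hpp hau x r, {f | dist x (f x) < 1},
    isOpen_setOf_dist_apply_lt x 1, by simp, roelckePrecompact_setOf_dist_apply_lt hpp hau x 1⟩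

/-- If `(X, d)` is a separable, complete, pair-propinquitous, approximately
ultrahomogeneous metric space, then for every `x ∈ X` and `r > 0` the set
`V_{x,r} = {f ∈ Iso(X) : d(x, f x) < r}` is a Roelcke precompact subset of the isometry
group of `X` (with the topology of pointwise convergence); in particular `Iso(X)` is
locally Roelcke precompact. -/
theorem iso_locallyRoelckePrecompact
    (X : Type*) [MetricSpace X] [TopologicalSpace.SeparableSpace X] [CompleteSpace X]
    (hpp : PairPropinquitous X) (hau : ApproximatelyUltrahomogeneous X)
    (x : X) (r : ℝ) (hr : 0 < r) :
    @RoelckePrecompact (X ≃ᵢ X) _ (isoGroupTopology X) {f : X ≃ᵢ X | dist x (f x) < r} ∧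
    @LocallyRoelckePrecompact (X ≃ᵢ X) _ (isoGroupTopology X) :=
  iso_locallyRoelckePrecompact_general X hpp hau x r
end

section
/- Suppose (X,d) is a separable, complete, pair-propinquitous, approximately ultrahomogeneous metric space of finite diameter. Then Iso(X) is a Roelcke precompact group, i.e., Iso(X) is a Roelcke precompact subset of itself. -/
open scoped Pointwise

/-- Extracting a basic neighborhood of the identity in the pointwise topology. -/
lemma aux_basic_nhds (X : Type*) [MetricSpace X] (V : Set (X ≃ᵢ X))
    (hV : V ∈ @nhds _ (isoGroupTopology X) 1) :
    ∃ (A : Finset X) (r : ℝ), 0 < r ∧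
      {g : X ≃ᵢ X | ∀ a ∈ A, dist (g a) a < r} ⊆ V := by
  rw [isoGroupTopology, nhds_induced, Filter.mem_comap] at hV
  obtain ⟨U, hU, hUV⟩ := hV
  rw [show ⇑(1 : X ≃ᵢ X) = (id : X → X) from rfl, nhds_pi, Filter.mem_pi] at hU
  obtain ⟨I, hIfin, t, ht, htU⟩ := hU
  have hball : ∀ x : X, ∃ ε : ℝ, 0 < ε ∧ Metric.ball x ε ⊆ t x := by
    intro x
    have := ht x
    rw [show (id : X → X) x = x from rfl] at this
    exact Metric.mem_nhds_iff.mp this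
  choose ε hεpos hεball using hball
  set A : Finset X := hIfin.toFinset with hA
  by_cases hne : A.Nonempty
  · refine ⟨A, A.inf' hne ε, ?_, ?_⟩
    · rw [Finset.lt_inf'_iff]
      exact fun b _ => hεpos b
    · intro g hg
      apply hUV
      apply htU
      intro x hx
      have hxA : x ∈ A := hIfin.mem_toFinset.mpr hx
      apply hεball x
      have h1 : dist (g x) x < A.inf' hne ε := hg x hxA
      exact Metric.mem_ball.mpr (lt_of_lt_of_le h1 (Finset.inf'_le ε hxA))
  · refine ⟨A, 1, one_pos, ?_⟩
    intro g _
    apply hUV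
    apply htU
    intro x hx
    exact absurd (hIfin.mem_toFinset.mpr hx) (fun h => hne ⟨x, h⟩)


/-- A finite `δ`-net for the distance matrices `(d(ι k, g (ι l)))` of isometries. -/
lemma aux_net (X : Type*) [MetricSpace X] (hdiam : ∃ C : ℝ, ∀ x y : X, dist x y ≤ C)
    (n : ℕ) (ι : Fin n → X) (δ : ℝ) (hδ : 0 < δ) :
    ∃ F : Finset (X ≃ᵢ X), ∀ g : X ≃ᵢ X, ∃ f ∈ F,
      ∀ k l : Fin n, |dist (ι k) (g (ι l)) - dist (ι k) (f (ι l))| < δ := by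
  obtain ⟨C₀, hC₀⟩ := hdiam
  set C : ℝ := max C₀ 0 with hC
  set Φ : (X ≃ᵢ X) → (Fin n × Fin n → ℝ) :=
    fun g => fun p => dist (ι p.1) (g (ι p.2)) with hΦ
  have hsub : Set.range Φ ⊆ Set.pi Set.univ (fun _ : Fin n × Fin n => Set.Icc (0:ℝ) C) := by
    rintro _ ⟨g, rfl⟩ p _
    exact ⟨dist_nonneg, le_trans (hC₀ _ _) (le_max_left _ _)⟩
  have hcomp : IsCompact (Set.pi Set.univ (fun _ : Fin n × Fin n => Set.Icc (0:ℝ) C)) :=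
    isCompact_univ_pi fun _ => isCompact_Icc
  have htb : TotallyBounded (Set.range Φ) := hcomp.totallyBounded.subset hsub
  rw [totallyBounded_iff_subset] at htb
  obtain ⟨t, hts, htfin, htcov⟩ := htb {p | dist p.1 p.2 < δ} (Metric.dist_mem_uniformity hδ)
  have hchoice : ∀ y ∈ t, ∃ f : X ≃ᵢ X, Φ f = y := fun y hy => hts hy
  classical
  choose ch hch using hchoice
  set F : Finset (X ≃ᵢ X) := htfin.toFinset.attach.image
    (fun y => ch y.1 (htfin.mem_toFinset.mp y.2)) with hF
  refine ⟨F, fun g => ?_⟩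
  have hg : Φ g ∈ ⋃ y ∈ t, {x | (x, y) ∈ {p : (Fin n × Fin n → ℝ) × (Fin n × Fin n → ℝ) | dist p.1 p.2 < δ}} :=
    htcov ⟨g, rfl⟩
  rw [Set.mem_iUnion₂] at hg
  obtain ⟨y, hy, hgy⟩ := hg
  refine ⟨ch y hy, ?_, ?_⟩
  · rw [hF, Finset.mem_image]
    exact ⟨⟨y, htfin.mem_toFinset.mpr hy⟩, Finset.mem_attach _ _, rfl⟩
  · intro k l
    have h1 : dist (Φ g (k, l)) (Φ (ch y hy) (k, l)) ≤ dist (Φ g) (Φ (ch y hy)) :=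
      dist_le_pi_dist _ _ _
    have h2 : dist (Φ g) (Φ (ch y hy)) < δ := by
      rw [hch y hy]; exact hgy
    have := lt_of_le_of_lt h1 h2
    rwa [Real.dist_eq] at this


/-- The key step: if the distance matrices of `g` and `f` are sufficiently close, then
`g ∈ V f V` for the basic neighborhood `V` determined by `ι` and `r`. -/
lemma aux_main (X : Type*) [MetricSpace X]
    (hpp : PairPropinquitous X) (hau : ApproximatelyUltrahomogeneous X)
    (n : ℕ) (ι : Fin n → X) (hinj : Function.Injective ι)
    (r : ℝ) (hr : 0 < r) :
    ∃ δ : ℝ, 0 < δ ∧ ∀ g f : X ≃ᵢ X,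
      (∀ k l : Fin n, |dist (ι k) (g (ι l)) - dist (ι k) (f (ι l))| < δ) →
      ∃ v w : X ≃ᵢ X, (∀ k, dist (v (ι k)) (ι k) < r) ∧
        (∀ k, dist (w (ι k)) (ι k) < r) ∧ g = v * f * w := by
  classical
  letI : MetricSpace (Fin n) := MetricSpace.induced ι hinj inferInstance
  have hdist : ∀ k l : Fin n, dist k l = dist (ι k) (ι l) := fun _ _ => rfl
  obtain ⟨δ, hδ, hδprop⟩ := hpp (Fin n) (r / 2) (by linarith)
  refine ⟨δ, hδ, fun g f hclose => ?_⟩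
  have hι : Isometry ι := Isometry.of_dist_eq fun _ _ => rfl
  have hfι : Isometry (⇑f ∘ ι) :=
    Isometry.of_dist_eq fun x y => (f.dist_eq (ι x) (ι y)).trans rfl
  have hgι : Isometry (⇑g ∘ ι) :=
    Isometry.of_dist_eq fun x y => (g.dist_eq (ι x) (ι y)).trans rfl
  obtain ⟨j₁', j₂', h1iso, h2iso, hcross, hnear1, hnear2⟩ :=
    hδprop ι (⇑f ∘ ι) ι (⇑g ∘ ι) hι hfι hι hgι
      (fun a b => by rw [abs_sub_comm]; exact hclose a b)
  -- distance identities
  have hj1d : ∀ k l : Fin n, dist (j₁' k) (j₁' l) = dist (ι k) (ι l) :=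
    fun k l => (h1iso.dist_eq k l).trans rfl
  have hj2d : ∀ k l : Fin n, dist (j₂' k) (j₂' l) = dist (g (ι k)) (g (ι l)) :=
    fun k l => (h2iso.dist_eq k l).trans (g.dist_eq (ι k) (ι l)).symm
  have hcross' : ∀ k l : Fin n, dist (ι k) (g (ι l)) = dist (j₁' k) (j₂' l) :=
    fun k l => hcross k l
  -- the finite partial isometry
  set B : Finset X :=
    (Finset.image j₁' Finset.univ) ∪ (Finset.image j₂' Finset.univ) with hB
  set F₀ : X → X := fun x =>
    if h1 : ∃ k, j₁' k = x then ι h1.choose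
    else if h2 : ∃ k, j₂' k = x then g (ι h2.choose) else x with hF₀
  have L1 : ∀ k : Fin n, F₀ (j₁' k) = ι k := by
    intro k
    have h1 : ∃ l, j₁' l = j₁' k := ⟨k, rfl⟩
    rw [hF₀]
    simp only [dif_pos h1]
    have h0 : dist (ι h1.choose) (ι k) = 0 := by
      rw [← hj1d, h1.choose_spec, dist_self]
    exact dist_eq_zero.mp h0
  have L2 : ∀ k : Fin n, F₀ (j₂' k) = g (ι k) := by
    intro k
    rw [hF₀]
    by_cases h1 : ∃ l, j₁' l = j₂' k
    · simp only [dif_pos h1]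
      have h0 : dist (ι h1.choose) (g (ι k)) = 0 := by
        rw [hcross', h1.choose_spec, dist_self]
      exact dist_eq_zero.mp h0
    · have h2 : ∃ l, j₂' l = j₂' k := ⟨k, rfl⟩
      simp only [dif_neg h1, dif_pos h2]
      have h0 : dist (g (ι h2.choose)) (g (ι k)) = 0 := by
        rw [← hj2d, h2.choose_spec, dist_self]
      exact dist_eq_zero.mp h0
  have hBmem : ∀ x ∈ B, (∃ k, j₁' k = x) ∨ (∃ k, j₂' k = x) := by
    intro x hx
    rw [hB, Finset.mem_union, Finset.mem_image, Finset.mem_image] at hx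
    rcases hx with ⟨k, _, hk⟩ | ⟨k, _, hk⟩
    · exact Or.inl ⟨k, hk⟩
    · exact Or.inr ⟨k, hk⟩
  have hGiso : Isometry (fun x : ↑B => F₀ ↑x) := by
    apply Isometry.of_dist_eq
    rintro ⟨x, hx⟩ ⟨y, hy⟩
    rw [Subtype.dist_eq]
    simp only
    rcases hBmem x hx with ⟨k, rfl⟩ | ⟨k, rfl⟩ <;>
      rcases hBmem y hy with ⟨l, rfl⟩ | ⟨l, rfl⟩
    · rw [L1, L1]; exact (hj1d k l).symm
    · rw [L1, L2]; exact hcross' k l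
    · rw [L2, L1]
      rw [dist_comm, dist_comm (j₂' k) (j₁' l)]
      exact hcross' l k
    · rw [L2, L2]; exact (hj2d k l).symm
  obtain ⟨ψ, hψ⟩ := hau B (fun x : ↑B => F₀ ↑x) hGiso (r / 2) (by linarith)
  have hmem1 : ∀ k : Fin n, j₁' k ∈ B := fun k =>
    Finset.mem_union_left _ (Finset.mem_image_of_mem _ (Finset.mem_univ k))
  have hmem2 : ∀ k : Fin n, j₂' k ∈ B := fun k =>
    Finset.mem_union_right _ (Finset.mem_image_of_mem _ (Finset.mem_univ k))
  have hψ1 : ∀ k : Fin n, dist (ι k) (ψ (j₁' k)) < r / 2 := by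
    intro k
    have := hψ ⟨j₁' k, hmem1 k⟩
    simp only at this
    rwa [L1] at this
  have hψ2 : ∀ k : Fin n, dist (g (ι k)) (ψ (j₂' k)) < r / 2 := by
    intro k
    have := hψ ⟨j₂' k, hmem2 k⟩
    simp only at this
    rwa [L2] at this
  refine ⟨ψ, f⁻¹ * ψ⁻¹ * g, ?_, ?_, ?_⟩
  · intro k
    have h1 : dist (ψ (ι k)) (ι k) ≤ dist (ψ (ι k)) (ψ (j₁' k)) + dist (ψ (j₁' k)) (ι k) :=
      dist_triangle _ _ _
    rw [ψ.dist_eq] at h1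
    have h2 := hnear1 k
    have h3 := hψ1 k
    rw [dist_comm (ψ (j₁' k)) (ι k)] at h1
    linarith
  · intro k
    have happ : (f⁻¹ * ψ⁻¹ * g) (ι k) = f.symm (ψ.symm (g (ι k))) := rfl
    rw [happ]
    have e1 : dist (f.symm (ψ.symm (g (ι k)))) (ι k) = dist (ψ.symm (g (ι k))) (f (ι k)) := by
      rw [← f.dist_eq (f.symm (ψ.symm (g (ι k)))) (ι k), f.apply_symm_apply]
    have e2 : dist (ψ.symm (g (ι k))) (f (ι k)) = dist (g (ι k)) (ψ (f (ι k))) := by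
      rw [← ψ.dist_eq (ψ.symm (g (ι k))) (f (ι k)), ψ.apply_symm_apply]
    rw [e1, e2]
    have h1 : dist (g (ι k)) (ψ (f (ι k))) ≤
        dist (g (ι k)) (ψ (j₂' k)) + dist (ψ (j₂' k)) (ψ (f (ι k))) := dist_triangle _ _ _
    rw [ψ.dist_eq] at h1
    have h2 := hψ2 k
    have h3 := hnear2 k
    rw [dist_comm (j₂' k) (f (ι k))] at h1
    have h3' : dist (f (ι k)) (j₂' k) < r / 2 := h3
    linarith [h1, h2, h3']
  · group


/-- If `(X, d)` is a separable, complete, pair-propinquitous, approximately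
ultrahomogeneous metric space of finite diameter, then the isometry group of `X` (with
the topology of pointwise convergence) is a Roelcke precompact group, i.e. a Roelcke
precompact subset of itself. -/
theorem iso_roelckePrecompact_of_finite_diameter
    (X : Type*) [MetricSpace X] [TopologicalSpace.SeparableSpace X] [CompleteSpace X]
    (hpp : PairPropinquitous X) (hau : ApproximatelyUltrahomogeneous X)
    (hdiam : ∃ C : ℝ, ∀ x y : X, dist x y ≤ C) :
    @RoelckePrecompact (X ≃ᵢ X) _ (isoGroupTopology X) Set.univ := by
  intro V hV
  obtain ⟨A, r, hr, hsub⟩ := aux_basic_nhds X V hV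
  -- enumerate `A`
  set n : ℕ := Fintype.card (↑A : Type _) with hn
  let e : Fin n ≃ (↑A : Type _) := (Fintype.equivFin (↑A : Type _)).symm
  let ι : Fin n → X := fun k => ((e k : X))
  have hinj : Function.Injective ι :=
    Subtype.val_injective.comp e.injective
  have hmem : ∀ a ∈ A, ∃ k, ι k = a := by
    intro a ha
    exact ⟨e.symm ⟨a, ha⟩, by simp [ι]⟩
  obtain ⟨δ, hδ, hkey⟩ := aux_main X hpp hau n ι hinj r hr
  obtain ⟨F, hF⟩ := aux_net X hdiam n ι δ hδ
  refine ⟨F, fun g _ => ?_⟩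
  obtain ⟨f, hfF, hclose⟩ := hF g
  obtain ⟨v, w, hv, hw, hgvw⟩ := hkey g f hclose
  have hvV : v ∈ V := by
    refine hsub ?_
    intro a ha
    obtain ⟨k, rfl⟩ := hmem a ha
    exact hv k
  have hwV : w ∈ V := by
    refine hsub ?_
    intro a ha
    obtain ⟨k, rfl⟩ := hmem a ha
    exact hw k
  exact ⟨v * f, ⟨v, hvV, f, hfF, rfl⟩, w, hwV, by rw [hgvw]⟩
end

section
/- Let G be a metrizable topological group and d_L a compatible, left-invariant, coarsely proper metric on G. Define d_∨(f,g) = d_L(f,g) + d_L(f⁻¹,g⁻¹) and d_∧(f,g) = inf_{h ∈ G} max{d_L(f,h), d_L(h⁻¹,g⁻¹)}. Then for any subset A ⊆ G the following are equivalent: (i) A is coarsely bounded; (ii) A has finite d_∨-diameter; (iii) A has finite d_∧-diameter. -/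
open scoped Pointwise

/-! A left-invariant pseudometric `d` is governed by the length `‖x‖ = d 1 x`, which is
invariant under inversion; hence `d x⁻¹ y⁻¹ ≤ ‖x‖ + ‖y‖`, so bounded `d`-diameter implies
bounded `d∨`-diameter, while `d∧ ≤ d` (take `h = y`). Conversely `d ≤ d∨`, and a witness `h` of
`d∧ x y < r` gives `‖x‖ < ‖y‖ + 2 r`. So all three notions of boundedness agree with
`dL`-boundedness, which is coarse boundedness by properness of `dL`. -/

structure IsLeftInvPseudometric {G : Type*} [Group G] (d : G → G → ℝ) : Prop where
  dist_self : ∀ x, d x x = 0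
  symm : ∀ x y, d x y = d y x
  triangle : ∀ x y z, d x z ≤ d x y + d y z
  mul_left : ∀ g x y, d (g * x) (g * y) = d x y

def BoundedDiam {G : Type*} (d : G → G → ℝ) (A : Set G) : Prop :=
  ∃ C : ℝ, ∀ x ∈ A, ∀ y ∈ A, d x y ≤ C

def joinDist {G : Type*} [Group G] (d : G → G → ℝ) (f g : G) : ℝ :=
  d f g + d f⁻¹ g⁻¹

noncomputable def meetDist {G : Type*} [Group G] (d : G → G → ℝ) (f g : G) : ℝ :=
  ⨅ h : G, max (d f h) (d h⁻¹ g⁻¹)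

namespace IsLeftInvPseudometric

variable {G : Type*} [Group G] {d : G → G → ℝ} (hd : IsLeftInvPseudometric d)
include hd

theorem nonneg (x y : G) : 0 ≤ d x y := by
  have := hd.triangle x y x
  rw [hd.dist_self, hd.symm y x] at this
  linarith

theorem dist_one_inv (x : G) : d 1 x⁻¹ = d 1 x := by
  rw [← hd.mul_left x 1 x⁻¹, mul_one, mul_inv_cancel, hd.symm]

theorem dist_le_dist_one_add (x y : G) : d x y ≤ d 1 x + d 1 y := by
  simpa only [hd.symm x 1] using hd.triangle x 1 y

theorem dist_inv_inv_le (x y : G) : d x⁻¹ y⁻¹ ≤ d 1 x + d 1 y := by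
  calc d x⁻¹ y⁻¹ = d 1 (x * y⁻¹) := by rw [← hd.mul_left x, mul_inv_cancel]
    _ ≤ d 1 x + d x (x * y⁻¹) := hd.triangle _ _ _
    _ = d 1 x + d 1 y := by
      rw [← hd.dist_one_inv y, ← hd.mul_left x 1 y⁻¹, mul_one]

theorem boundedDiam_iff_exists_dist_one_le {A : Set G} :
    BoundedDiam d A ↔ ∃ C : ℝ, ∀ x ∈ A, d 1 x ≤ C := by
  constructor
  · rintro ⟨C, hC⟩
    rcases A.eq_empty_or_nonempty with rfl | ⟨a, ha⟩
    · exact ⟨0, by simp⟩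
    · exact ⟨d 1 a + C, fun x hx => (hd.triangle 1 a x).trans (by linarith [hC a ha x hx])⟩
  · rintro ⟨C, hC⟩
    exact ⟨C + C, fun x hx y hy =>
      (hd.dist_le_dist_one_add x y).trans (add_le_add (hC x hx) (hC y hy))⟩

theorem boundedDiam_joinDist_iff {A : Set G} : BoundedDiam (joinDist d) A ↔ BoundedDiam d A := by
  constructor
  · rintro ⟨C, hC⟩
    exact ⟨C, fun x hx y hy =>
      (le_add_of_nonneg_right (hd.nonneg x⁻¹ y⁻¹)).trans (hC x hx y hy)⟩
  · intro hA
    obtain ⟨C, hC⟩ := hd.boundedDiam_iff_exists_dist_one_le.mp hA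
    obtain ⟨D, hD⟩ := hA
    exact ⟨D + (C + C), fun x hx y hy => add_le_add (hD x hx y hy)
      ((hd.dist_inv_inv_le x y).trans (add_le_add (hC x hx) (hC y hy)))⟩

theorem meetDist_le (x y : G) : meetDist d x y ≤ d x y := by
  have hbdd : BddBelow (Set.range fun h => max (d x h) (d h⁻¹ y⁻¹)) :=
    ⟨0, by rintro _ ⟨h, rfl⟩; exact le_max_of_le_left (hd.nonneg x h)⟩
  calc meetDist d x y ≤ max (d x y) (d y⁻¹ y⁻¹) := ciInf_le hbdd y
    _ = d x y := by rw [hd.dist_self, max_eq_left (hd.nonneg x y)]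

theorem dist_one_lt_of_meetDist_lt {x y : G} {r : ℝ} (h : meetDist d x y < r) :
    d 1 x < d 1 y + 2 * r := by
  obtain ⟨z, hz⟩ := exists_lt_of_ciInf_lt h
  have hxz : d x z < r := (le_max_left _ _).trans_lt hz
  have hzy : d z⁻¹ y⁻¹ < r := (le_max_right _ _).trans_lt hz
  have hz1 : d 1 z < d 1 y + r := by
    calc d 1 z = d 1 z⁻¹ := (hd.dist_one_inv z).symm
      _ ≤ d 1 y⁻¹ + d y⁻¹ z⁻¹ := hd.triangle _ _ _
      _ < d 1 y + r := by rw [hd.dist_one_inv, hd.symm y⁻¹]; linarith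
  linarith [hd.triangle 1 z x, hd.symm z x]

theorem boundedDiam_meetDist_iff {A : Set G} : BoundedDiam (meetDist d) A ↔ BoundedDiam d A := by
  constructor
  · rintro ⟨C, hC⟩
    rcases A.eq_empty_or_nonempty with rfl | ⟨a, ha⟩
    · exact ⟨0, by simp⟩
    refine hd.boundedDiam_iff_exists_dist_one_le.mpr ⟨d 1 a + 2 * (C + 1), fun x hx => ?_⟩
    exact (hd.dist_one_lt_of_meetDist_lt ((hC x hx a ha).trans_lt (lt_add_one C))).le
  · rintro ⟨C, hC⟩
    exact ⟨C, fun x hx y hy => (hd.meetDist_le x y).trans (hC x hx y hy)⟩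

end IsLeftInvPseudometric

theorem coarselyBounded_iff_join_meet_bounded_general
    (G : Type*) [Group G] [TopologicalSpace G]
    (dL : G → G → ℝ)
    (dL_eq_zero : ∀ x y, dL x y = 0 ↔ x = y)
    (dL_symm : ∀ x y, dL x y = dL y x)
    (dL_triangle : ∀ x y z, dL x z ≤ dL x y + dL y z)
    (dL_leftInvariant : ∀ g x y, dL (g * x) (g * y) = dL x y)
    (dL_coarselyProper :
      ∀ A : Set G, IsCoarselyBounded A ↔ ∃ C : ℝ, ∀ x ∈ A, ∀ y ∈ A, dL x y ≤ C)
    (A : Set G) :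
    (IsCoarselyBounded A ↔
      ∃ C : ℝ, ∀ x ∈ A, ∀ y ∈ A, dL x y + dL x⁻¹ y⁻¹ ≤ C) ∧
    (IsCoarselyBounded A ↔
      ∃ C : ℝ, ∀ x ∈ A, ∀ y ∈ A, (⨅ h : G, max (dL x h) (dL h⁻¹ y⁻¹)) ≤ C) := by
  have hd : IsLeftInvPseudometric dL :=
    ⟨fun x => (dL_eq_zero x x).mpr rfl, dL_symm, dL_triangle, dL_leftInvariant⟩
  exact ⟨(dL_coarselyProper A).trans hd.boundedDiam_joinDist_iff.symm,
    (dL_coarselyProper A).trans hd.boundedDiam_meetDist_iff.symm⟩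

/-- Let `G` be a metrizable topological group and `dL` a compatible, left-invariant,
coarsely proper metric on `G`.  With `d∨ f g = dL f g + dL f⁻¹ g⁻¹` and
`d∧ f g = inf_h max (dL f h) (dL h⁻¹ g⁻¹)`, the following are equivalent for `A ⊆ G`:
(i) `A` is coarsely bounded; (ii) `A` has finite `d∨`-diameter; (iii) `A` has finite
`d∧`-diameter. -/
theorem coarselyBounded_iff_join_meet_bounded
    (G : Type*) [Group G] [TopologicalSpace G] [IsTopologicalGroup G]
    (dL : G → G → ℝ)
    (dL_eq_zero : ∀ x y, dL x y = 0 ↔ x = y)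
    (dL_symm : ∀ x y, dL x y = dL y x)
    (dL_triangle : ∀ x y z, dL x z ≤ dL x y + dL y z)
    (dL_compatible : ∀ s : Set G, IsOpen s ↔ ∀ g ∈ s, ∃ ε > 0, {h | dL g h < ε} ⊆ s)
    (dL_leftInvariant : ∀ g x y, dL (g * x) (g * y) = dL x y)
    (dL_coarselyProper :
      ∀ A : Set G, IsCoarselyBounded A ↔ ∃ C : ℝ, ∀ x ∈ A, ∀ y ∈ A, dL x y ≤ C)
    (A : Set G) :
    (IsCoarselyBounded A ↔
      ∃ C : ℝ, ∀ x ∈ A, ∀ y ∈ A, dL x y + dL x⁻¹ y⁻¹ ≤ C) ∧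
    (IsCoarselyBounded A ↔
      ∃ C : ℝ, ∀ x ∈ A, ∀ y ∈ A, (⨅ h : G, max (dL x h) (dL h⁻¹ y⁻¹)) ≤ C) :=
  coarselyBounded_iff_join_meet_bounded_general G dL dL_eq_zero dL_symm dL_triangle dL_leftInvariant
    dL_coarselyProper A
end
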